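/- Let V be a finite-dimensional real vector space and let F(V) be the field of real rational functions on V (the fraction field of the polynomial ring P(V)). Let (R^0, R^1, ...) be a sequence of W-valued polynomial maps on V with W finite-dimensional, and let k be the smallest integer such that {R^0(X), ..., R^k(X)} is linearly dependent for all X ∈ V. Then there exist uniquely determined rational functions a_1, ..., a_k ∈ F(V) such that R^k = -(a_1 R^{k-1} + a_2 R^{k-2} + ... + a_k R^0) as W-valued rational maps on V. -/

import Mathlib

open MvPolynomial Matrix

section Gram

variable {K : Type*} [Field K] {r m : ℕ}

/-- Gram-matrix criterion for linear independence over a "formally real" field. -/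
private lemma gram_det_ne_zero_iff
    (hK : ∀ f : Fin m → K, ∑ j, f j * f j = 0 → f = 0)
    (w : Fin r → Fin m → K) :
    LinearIndependent K w ↔ ((Matrix.of w) * (Matrix.of w)ᵀ).det ≠ 0 := by
  set W : Matrix (Fin r) (Fin m) K := Matrix.of w with hW
  constructor
  · intro h hdet
    obtain ⟨c, hc0, hc⟩ := Matrix.exists_mulVec_eq_zero_iff.2 hdet
    have hv : c ᵥ* W = 0 := by
      apply hK
      calc ∑ j, (c ᵥ* W) j * (c ᵥ* W) j = (c ᵥ* W) ⬝ᵥ (c ᵥ* W) := rfl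
        _ = (c ᵥ* W) ⬝ᵥ (Wᵀ *ᵥ c) := by rw [Matrix.mulVec_transpose]
        _ = ((c ᵥ* W) ᵥ* Wᵀ) ⬝ᵥ c := Matrix.dotProduct_mulVec _ _ _
        _ = (c ᵥ* (W * Wᵀ)) ⬝ᵥ c := by rw [Matrix.vecMul_vecMul]
        _ = ((W * Wᵀ)ᵀ *ᵥ c) ⬝ᵥ c := by rw [Matrix.mulVec_transpose]
        _ = ((W * Wᵀ) *ᵥ c) ⬝ᵥ c := by
              rw [Matrix.transpose_mul, Matrix.transpose_transpose]
        _ = 0 := by rw [hc]; simp [dotProduct]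
    refine hc0 ?_
    have := Fintype.linearIndependent_iff.1 h c ?_
    · funext i; exact this i
    · funext j
      have := congrFun hv j
      simpa [Matrix.vecMul, dotProduct, hW] using this
  · intro hdet
    rw [Fintype.linearIndependent_iff]
    intro c hc
    have hv : c ᵥ* W = 0 := by
      funext j
      have := congrFun hc j
      simpa [Matrix.vecMul, dotProduct, hW] using this
    have hmv : (W * Wᵀ) *ᵥ c = 0 := by
      rw [← Matrix.mulVec_mulVec, Matrix.mulVec_transpose, hv, Matrix.mulVec_zero]
    intro i
    by_contra hci
    exact hdet (Matrix.exists_mulVec_eq_zero_iff.1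
      ⟨c, fun h0 => hci (by rw [h0]; rfl), hmv⟩)

end Gram

private lemma real_sq_sum {m : ℕ} (f : Fin m → ℝ) (h : ∑ j, f j * f j = 0) : f = 0 := by
  funext j
  have := (Finset.sum_eq_zero_iff_of_nonneg
    (fun i _ => mul_self_nonneg (f i))).1 h j (Finset.mem_univ j)
  exact mul_self_eq_zero.1 this

private lemma frac_sq_sum {n m : ℕ}
    (f : Fin m → FractionRing (MvPolynomial (Fin n) ℝ))
    (h : ∑ j, f j * f j = 0) : f = 0 := by
  let Poly := MvPolynomial (Fin n) ℝ
  let F := FractionRing Poly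
  let φ : Poly →+* F := algebraMap Poly F
  obtain ⟨b, hb⟩ := IsLocalization.exist_integer_multiples_of_finite
    (nonZeroDivisors Poly) f
  have hb' : ∀ i, ∃ p : Poly, φ p = (b : Poly) • f i := fun i => hb i
  choose p hp using hb'
  have hinj : Function.Injective φ := IsFractionRing.injective Poly F
  have hsum : ∑ j, p j * p j = 0 := by
    apply hinj
    rw [map_sum, map_zero]
    calc ∑ j, φ (p j * p j) = ∑ j, ((b : Poly) • f j) * ((b : Poly) • f j) := by
          simp_rw [_root_.map_mul, hp]
      _ = φ (b : Poly) * φ (b : Poly) * ∑ j, f j * f j := by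
          rw [Finset.mul_sum]
          refine Finset.sum_congr rfl fun j _ => ?_
          rw [Algebra.smul_def]; ring
      _ = 0 := by rw [show ∑ j, f j * f j = 0 from h, mul_zero]
  have hp0 : ∀ j, p j = 0 := by
    intro j
    have heval : ∀ X : Fin n → ℝ, eval X (p j) = 0 := by
      intro X
      have : ∑ i, eval X (p i) * eval X (p i) = 0 := by
        rw [← map_zero (eval X), ← hsum, map_sum]
        simp [_root_.map_mul]
      have := real_sq_sum (fun i => eval X (p i)) this
      exact congrFun this j
    have : p j = (0 : Poly) := MvPolynomial.funext (fun X => by simp [heval X])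
    exact this
  have hbne : φ (b : Poly) ≠ 0 := by
    have : (b : Poly) ≠ 0 := nonZeroDivisors.coe_ne_zero b
    simpa using fun h0 => this (hinj (by simpa using h0))
  funext j
  have : φ (b : Poly) * f j = 0 := by
    rw [← Algebra.smul_def, ← hp j, hp0 j, map_zero]
  rcases mul_eq_zero.1 this with h' | h'
  · exact absurd h' hbne
  · simpa using h'

private lemma gram_map {R S : Type*} [CommRing R] [CommRing S] (f : R →+* S)
    {r m : ℕ} (w : Fin r → Fin m → R) :
    (Matrix.of fun i j => f (w i j)) * (Matrix.of fun i j => f (w i j))ᵀ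
      = ((Matrix.of w) * (Matrix.of w)ᵀ).map f := by
  ext i i'
  simp [Matrix.mul_apply, map_sum, _root_.map_mul]

private lemma det_map_rh {R S : Type*} [CommRing R] [CommRing S] (f : R →+* S)
    {r : ℕ} (M : Matrix (Fin r) (Fin r) R) : (M.map f).det = f M.det := by
  rw [RingHom.map_det, RingHom.mapMatrix_apply]

/-- Let `V = ℝⁿ`, `F(V)` the field of real rational functions on `V`
(the fraction field of the polynomial ring), and let `R^i` be `W`-valued polynomial
maps on `V` (here `W = ℝᵐ`, with `R^i` given coordinatewise by the polynomials
`P i j`).  If `k` is the smallest integer such that `{R^0(X), …, R^k(X)}` is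
linearly dependent for all `X` (minimality being witnessed by a point `X₀` where
`{R^0(X₀), …, R^{k-1}(X₀)}` is independent), then there exist uniquely determined
rational functions `a_1, …, a_k ∈ F(V)` with
`R^k = -(a_1 R^{k-1} + ⋯ + a_k R^0)` as `W`-valued rational maps. -/
theorem exists_unique_rational_dependence_coeffs
    (n m k : ℕ) (P : ℕ → Fin m → MvPolynomial (Fin n) ℝ)
    (hdep : ∀ X : Fin n → ℝ,
      ¬ LinearIndependent ℝ
        (fun i : Fin (k + 1) => fun j : Fin m => MvPolynomial.eval X (P i j)))
    (hmin : ∃ X₀ : Fin n → ℝ,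
      LinearIndependent ℝ
        (fun i : Fin k => fun j : Fin m => MvPolynomial.eval X₀ (P i j))) :
    ∃! a : Fin k → FractionRing (MvPolynomial (Fin n) ℝ),
      ∀ j : Fin m,
        algebraMap (MvPolynomial (Fin n) ℝ) (FractionRing (MvPolynomial (Fin n) ℝ)) (P k j)
          = -∑ i : Fin k, a i *
              algebraMap (MvPolynomial (Fin n) ℝ) (FractionRing (MvPolynomial (Fin n) ℝ))
                (P (k - 1 - i.val) j) := by
  classical
  have hinj : Function.Injective (algebraMap (MvPolynomial (Fin n) ℝ)
      (FractionRing (MvPolynomial (Fin n) ℝ))) := IsFractionRing.injective _ _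
  set φ := algebraMap (MvPolynomial (Fin n) ℝ) (FractionRing (MvPolynomial (Fin n) ℝ)) with hφ
  -- independence of the first k rows over the fraction field
  have h1 : LinearIndependent (FractionRing (MvPolynomial (Fin n) ℝ))
      (fun i : Fin k => fun j : Fin m => φ (P i j)) := by
    rw [gram_det_ne_zero_iff frac_sq_sum, gram_map φ, det_map_rh]
    intro h0
    have hdet0 : ((Matrix.of fun (i : Fin k) (j : Fin m) => P i j) *
        (Matrix.of fun (i : Fin k) (j : Fin m) => P i j)ᵀ).det = 0 := by
      apply hinj; rw [h0, map_zero]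
    obtain ⟨X₀, hX₀⟩ := hmin
    have h2 := (gram_det_ne_zero_iff real_sq_sum _).1 hX₀
    apply h2
    rw [gram_map (MvPolynomial.eval X₀), det_map_rh, hdet0, map_zero]
  -- dependence of the first k+1 rows over the fraction field
  have h2 : ¬ LinearIndependent (FractionRing (MvPolynomial (Fin n) ℝ))
      (fun i : Fin (k + 1) => fun j : Fin m => φ (P i j)) := by
    rw [gram_det_ne_zero_iff frac_sq_sum, gram_map φ, det_map_rh, not_not]
    have hdet0 : ((Matrix.of fun (i : Fin (k + 1)) (j : Fin m) => P i j) *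
        (Matrix.of fun (i : Fin (k + 1)) (j : Fin m) => P i j)ᵀ).det = 0 := by
      apply MvPolynomial.funext
      intro X
      rw [map_zero]
      have hd := hdep X
      rw [gram_det_ne_zero_iff real_sq_sum, not_not, gram_map (MvPolynomial.eval X),
        det_map_rh] at hd
      exact hd
    rw [hdet0, map_zero]
  -- split off the last row
  have hsn : (fun i : Fin (k + 1) => fun j : Fin m => φ (P i j)) =
      Fin.snoc (fun i : Fin k => fun j : Fin m => φ (P i j)) (fun j => φ (P k j)) := by
    funext i
    refine Fin.lastCases ?_ (fun i => ?_) i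
    · simp
    · simp
  rw [hsn, linearIndependent_fin_snoc] at h2
  have hmem : (fun j => φ (P k j)) ∈ Submodule.span (FractionRing (MvPolynomial (Fin n) ℝ))
      (Set.range fun i : Fin k => fun j : Fin m => φ (P i j)) := by
    by_contra hmem
    exact h2 ⟨h1, hmem⟩
  rw [Submodule.mem_span_range_iff_exists_fun] at hmem
  obtain ⟨c, hc⟩ := hmem
  -- index reversal
  have hek : ∀ i : Fin k, k - 1 - i.val < k := fun i => by have := i.isLt; omega
  set e : Fin k → Fin k := fun i => ⟨k - 1 - i.val, hek i⟩ with hedef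
  have he : Function.Involutive e := by
    intro i
    ext
    show k - 1 - (k - 1 - i.val) = i.val
    have := i.isLt; omega
  have hsum_e : ∀ g : Fin k → FractionRing (MvPolynomial (Fin n) ℝ),
      ∑ i, g (e i) = ∑ i, g i := fun g => Equiv.sum_comp he.toPerm g
  have hcsum : ∀ j : Fin m, ∑ i : Fin k, c i * φ (P i j) = φ (P k j) := by
    intro j
    have := congrFun hc j
    simpa [Finset.sum_apply] using this
  refine ⟨fun i => -(c (e i)), ?_, ?_⟩
  · intro j
    calc φ (P k j) = ∑ i : Fin k, c i * φ (P i j) := (hcsum j).symm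
      _ = ∑ i : Fin k, c (e i) * φ (P ((e i).val) j) :=
          (hsum_e (fun i => c i * φ (P i.val j))).symm
      _ = ∑ i : Fin k, c (e i) * φ (P (k - 1 - i.val) j) := rfl
      _ = -∑ i : Fin k, (-(c (e i))) * φ (P (k - 1 - i.val) j) := by
          simp
  · intro a' ha'
    have key : ∀ j : Fin m,
        ∑ i : Fin k, (a' i - -(c (e i))) * φ (P (k - 1 - i.val) j) = 0 := by
      intro j
      have h₂ : φ (P k j) = -∑ i : Fin k, (-(c (e i))) * φ (P (k - 1 - i.val) j) := by
        calc φ (P k j) = ∑ i : Fin k, c i * φ (P i j) := (hcsum j).symm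
          _ = ∑ i : Fin k, c (e i) * φ (P ((e i).val) j) :=
              (hsum_e (fun i => c i * φ (P i.val j))).symm
          _ = -∑ i : Fin k, (-(c (e i))) * φ (P (k - 1 - i.val) j) := by simp; rfl
      have h₃ : ∑ i : Fin k, a' i * φ (P (k - 1 - i.val) j)
          = ∑ i : Fin k, (-(c (e i))) * φ (P (k - 1 - i.val) j) :=
        neg_injective ((ha' j).symm.trans h₂)
      have hsplit : ∑ i : Fin k, (a' i - -(c (e i))) * φ (P (k - 1 - i.val) j)
          = ∑ i : Fin k, a' i * φ (P (k - 1 - i.val) j)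
            - ∑ i : Fin k, (-(c (e i))) * φ (P (k - 1 - i.val) j) := by
        rw [← Finset.sum_sub_distrib]
        exact Finset.sum_congr rfl fun i _ => by ring
      rw [hsplit, h₃, sub_self]
    have hd : ∀ i : Fin k, a' (e i) - -(c i) = 0 := by
      apply Fintype.linearIndependent_iff.1 h1 (fun i => a' (e i) - -(c i))
      funext j
      rw [Finset.sum_apply]
      have hg := hsum_e (fun i => (a' (e i) - -(c i)) * φ (P i.val j))
      have hge : ∀ i : Fin k, (a' (e (e i)) - -(c (e i))) * φ (P ((e i).val) j)
          = (a' i - -(c (e i))) * φ (P (k - 1 - i.val) j) := by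
        intro i; rw [he i]
      calc ∑ i : Fin k, (a' (e i) - -(c i)) • (fun j : Fin m => φ (P i j)) j
          = ∑ i : Fin k, (a' (e i) - -(c i)) * φ (P i j) := by
            simp [smul_eq_mul]
        _ = ∑ i : Fin k, (a' (e (e i)) - -(c (e i))) * φ (P ((e i).val) j) := hg.symm
        _ = ∑ i : Fin k, (a' i - -(c (e i))) * φ (P (k - 1 - i.val) j) :=
            Finset.sum_congr rfl fun i _ => hge i
        _ = 0 := key j
      |>.trans rfl
    funext i
    have := hd (e i)
    rw [he i] at this
    exact sub_eq_zero.1 this
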